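/- arXiv:2604.03475 — 4 statements merged into one kernel-verified Lean document; each statement's English description precedes it below -/
import Mathlib

section
/- Let c, s, x, y be real numbers with 0 <= x, 0 <= y, and c^2 + s^2 <= x*y. Then for all real c̄, s̄, x̄, ȳ, letting n0 := Real.sqrt(4*c̄^2 + 4*s̄^2 + (x̄ - ȳ)^2), one has 4*c̄*c + 4*s̄*s + (x̄ - ȳ - n0)*x - (x̄ - ȳ + n0)*y <= 0. That is, the linear cut generated at any point (c̄, s̄, x̄, ȳ) is valid for every point of the rotated second-order cone. -/
/-- The linear cut generated at any point `(c̄, s̄, x̄, ȳ)` is valid for every point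
of the rotated second-order cone. -/
theorem soc_cut_valid (c s x y : ℝ) (hx : 0 ≤ x) (hy : 0 ≤ y)
    (h : c ^ 2 + s ^ 2 ≤ x * y) :
    ∀ cbar sbar xbar ybar : ℝ,
      4 * cbar * c + 4 * sbar * s +
          (xbar - ybar - Real.sqrt (4 * cbar ^ 2 + 4 * sbar ^ 2 + (xbar - ybar) ^ 2)) * x -
          (xbar - ybar + Real.sqrt (4 * cbar ^ 2 + 4 * sbar ^ 2 + (xbar - ybar) ^ 2)) * y ≤ 0 := by
  intro cbar sbar xbar ybar
  set A := 4 * cbar ^ 2 + 4 * sbar ^ 2 + (xbar - ybar) ^ 2 with hA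
  have hA0 : 0 ≤ A := by positivity
  set n0 := Real.sqrt A with hn0
  have hn0nn : 0 ≤ n0 := Real.sqrt_nonneg _
  have hB0 : (0:ℝ) ≤ 4*c^2+4*s^2+(x-y)^2 := by positivity
  have ht : 4*cbar*c + 4*sbar*s + (xbar-ybar)*(x-y)
      ≤ n0 * Real.sqrt (4*c^2+4*s^2+(x-y)^2) := by
    have hcs : (4*cbar*c + 4*sbar*s + (xbar-ybar)*(x-y))^2
        ≤ A * (4*c^2+4*s^2+(x-y)^2) := by
      nlinarith [sq_nonneg (2*cbar*(x-y) - (xbar-ybar)*(2*c)),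
        sq_nonneg (2*sbar*(x-y) - (xbar-ybar)*(2*s)),
        sq_nonneg (cbar*s - sbar*c)]
    calc 4*cbar*c + 4*sbar*s + (xbar-ybar)*(x-y)
        ≤ |4*cbar*c + 4*sbar*s + (xbar-ybar)*(x-y)| := le_abs_self _
      _ = Real.sqrt ((4*cbar*c + 4*sbar*s + (xbar-ybar)*(x-y))^2) :=
          (Real.sqrt_sq_eq_abs _).symm
      _ ≤ Real.sqrt (A * (4*c^2+4*s^2+(x-y)^2)) := Real.sqrt_le_sqrt hcs
      _ = n0 * Real.sqrt (4*c^2+4*s^2+(x-y)^2) := Real.sqrt_mul hA0 _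
  have hsq : Real.sqrt (4*c^2+4*s^2+(x-y)^2) ≤ x + y := by
    have h1 : Real.sqrt (4*c^2+4*s^2+(x-y)^2) ≤ Real.sqrt ((x+y)^2) :=
      Real.sqrt_le_sqrt (by nlinarith)
    rwa [Real.sqrt_sq (by linarith)] at h1
  have := mul_le_mul_of_nonneg_left hsq hn0nn
  linarith
end

section
/- Let c̄, s̄, x̄, ȳ be real numbers such that (x̄ + ȳ)^2 < 4*c̄^2 + 4*s̄^2 + (x̄ - ȳ)^2, and let n0 := Real.sqrt(4*c̄^2 + 4*s̄^2 + (x̄ - ȳ)^2). Then 0 < 4*c̄*c̄ + 4*s̄*s̄ + (x̄ - ȳ - n0)*x̄ - (x̄ - ȳ + n0)*ȳ; that is, the linear cut generated at a point violating the second-order-cone constraint 4c^2 + 4s^2 + (x - y)^2 <= (x + y)^2 is itself violated at that point, so the cut separates it. -/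
/-- The linear cut generated at a point violating the second-order-cone constraint
is itself violated at that point, so the cut separates it. -/
theorem soc_cut_separates (cbar sbar xbar ybar : ℝ)
    (hviol : (xbar + ybar) ^ 2 < 4 * cbar ^ 2 + 4 * sbar ^ 2 + (xbar - ybar) ^ 2) :
    0 < 4 * cbar * cbar + 4 * sbar * sbar +
        (xbar - ybar - Real.sqrt (4 * cbar ^ 2 + 4 * sbar ^ 2 + (xbar - ybar) ^ 2)) * xbar -
        (xbar - ybar + Real.sqrt (4 * cbar ^ 2 + 4 * sbar ^ 2 + (xbar - ybar) ^ 2)) * ybar := by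
  set n0 := Real.sqrt (4 * cbar ^ 2 + 4 * sbar ^ 2 + (xbar - ybar) ^ 2) with hn0
  have hnn : (0:ℝ) ≤ 4 * cbar ^ 2 + 4 * sbar ^ 2 + (xbar - ybar) ^ 2 := by positivity
  have hsq : n0 ^ 2 = 4 * cbar ^ 2 + 4 * sbar ^ 2 + (xbar - ybar) ^ 2 := Real.sq_sqrt hnn
  have habs : |xbar + ybar| < n0 := by
    rw [← Real.sqrt_sq_eq_abs]
    exact Real.sqrt_lt_sqrt (sq_nonneg _) hviol
  have h1 : xbar + ybar < n0 := lt_of_le_of_lt (le_abs_self _) habs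
  have h2 : 0 < n0 := lt_of_le_of_lt (abs_nonneg _) habs
  nlinarith [mul_pos h2 (sub_pos.mpr h1)]
end

section
/- Let X be a type, F a set in X, K a nonempty finite type, and f : X → K → ℝ. Let S be a nonempty finite subset of K, let x_S ∈ F be an S-minimizer, and let k* ∈ K satisfy f(x_S, k*) = max_{k ∈ K} f(x_S, k). If k* ∈ S, then x_S is optimal for the full robust problem, i.e., max_{k ∈ K} f(x_S, k) <= max_{k ∈ K} f(x, k) for every x ∈ F, and moreover max_{k ∈ S} f(x_S, k) = max_{k ∈ K} f(x_S, k), so the lower and upper bounds of the column-and-constraint generation algorithm coincide. -/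
/-- If the worst-case scenario for the current master solution already belongs to
the current scenario set, then the master solution is optimal for the full robust
problem and the lower and upper bounds coincide. -/
theorem ccg_termination {X K : Type*} [Fintype K] [Nonempty K]
    (F : Set X) (f : X → K → ℝ) (S : Finset K) (hS : S.Nonempty)
    (xS : X) (hxS : xS ∈ F)
    (hminS : ∀ x' ∈ F, S.sup' hS (f xS) ≤ S.sup' hS (f x'))
    (kstar : K)
    (hworst : f xS kstar = Finset.univ.sup' Finset.univ_nonempty (f xS))
    (hmem : kstar ∈ S) :
    (∀ x ∈ F, Finset.univ.sup' Finset.univ_nonempty (f xS) ≤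
        Finset.univ.sup' Finset.univ_nonempty (f x)) ∧
      S.sup' hS (f xS) = Finset.univ.sup' Finset.univ_nonempty (f xS) := by
  have key : S.sup' hS (f xS) = Finset.univ.sup' Finset.univ_nonempty (f xS) := by
    apply le_antisymm
    · exact Finset.sup'_le _ _ fun k hk => Finset.le_sup' _ (Finset.mem_univ k)
    · rw [← hworst]; exact Finset.le_sup' _ hmem
  refine ⟨fun x hx => ?_, key⟩
  calc Finset.univ.sup' Finset.univ_nonempty (f xS) = S.sup' hS (f xS) := key.symm
    _ ≤ S.sup' hS (f x) := hminS x hx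
    _ ≤ Finset.univ.sup' Finset.univ_nonempty (f x) :=
        Finset.sup'_le _ _ fun k hk => Finset.le_sup' _ (Finset.mem_univ k)
end

section
/- Let X be a type, F a set in X, K a nonempty finite type, and f : X → K → ℝ. Suppose sequences S : ℕ → Finset K, x : ℕ → X, and k : ℕ → K satisfy: S 0 is nonempty; for every i, x i is an (S i)-minimizer; for every i, f(x i, k i) = max_{j ∈ K} f(x i, j); and S (i+1) = S i ∪ {k i}. Then there exists i < Fintype.card K such that k i ∈ S i, and for this i, x i is optimal for the full robust problem: max_{j ∈ K} f(x i, j) <= max_{j ∈ K} f(x', j) for every x' ∈ F. That is, the column-and-constraint generation algorithm over a finite scenario set converges to an optimal solution in at most (number of scenarios) iterations. -/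
/-- The column-and-constraint generation algorithm over a finite scenario set
converges to an optimal solution of the full robust problem in at most
(number of scenarios) iterations. -/
theorem ccg_converges {X K : Type*} [Fintype K] [DecidableEq K] [Nonempty K]
    (F : Set X) (f : X → K → ℝ)
    (S : ℕ → Finset K) (x : ℕ → X) (k : ℕ → K)
    (hS0 : (S 0).Nonempty) (hSne : ∀ i, (S i).Nonempty)
    (hmem : ∀ i, x i ∈ F)
    (hmin : ∀ i, ∀ x' ∈ F,
      (S i).sup' (hSne i) (f (x i)) ≤ (S i).sup' (hSne i) (f x'))
    (hworst : ∀ i, f (x i) (k i) = Finset.univ.sup' Finset.univ_nonempty (f (x i)))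
    (hstep : ∀ i, S (i + 1) = S i ∪ {k i}) :
    ∃ i < Fintype.card K, k i ∈ S i ∧
      ∀ x' ∈ F, Finset.univ.sup' Finset.univ_nonempty (f (x i)) ≤
        Finset.univ.sup' Finset.univ_nonempty (f x') := by
  have hex : ∃ i < Fintype.card K, k i ∈ S i := by
    by_contra h
    push_neg at h
    have key : ∀ i ≤ Fintype.card K, i + 1 ≤ (S i).card := by
      intro i hi
      induction i with
      | zero => simpa using Finset.card_pos.mpr hS0
      | succ n ih =>
        have hn : n < Fintype.card K := Nat.lt_of_succ_le hi
        have hk : k n ∉ S n := h n hn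
        have hins : S (n + 1) = insert (k n) (S n) := by
          rw [hstep n]; ext a; simp [or_comm]
        have hc : (S (n + 1)).card = (S n).card + 1 := by
          rw [hins, Finset.card_insert_of_notMem hk]
        have := ih (le_of_lt hn)
        omega
    have h1 := key (Fintype.card K) le_rfl
    have h2 : (S (Fintype.card K)).card ≤ Fintype.card K := Finset.card_le_univ _
    omega
  obtain ⟨i, hi, hki⟩ := hex
  refine ⟨i, hi, hki, fun x' hx' => ?_⟩
  calc Finset.univ.sup' Finset.univ_nonempty (f (x i))
      = f (x i) (k i) := (hworst i).symm
    _ ≤ (S i).sup' (hSne i) (f (x i)) := Finset.le_sup' _ hki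
    _ ≤ (S i).sup' (hSne i) (f x') := hmin i x' hx'
    _ ≤ Finset.univ.sup' Finset.univ_nonempty (f x') :=
        Finset.sup'_le _ _ fun j _ => Finset.le_sup' _ (Finset.mem_univ j)
end
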